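/- arXiv:2009.09971 — 4 statements merged into one kernel-verified Lean document; each statement's English description precedes it below -/
import Mathlib

section
/- Let G be a graph, S a minimal feedback vertex set of G - u for a vertex u of G. Then starting from S ∪ {u} and removing redundant vertices to obtain a minimal fvs of G, the only vertex that may be removed is u; in particular G has a minimal feedback vertex set of size at least |S|. -/
open SimpleGraph

def IsFVS {V : Type*} (G : SimpleGraph V) (S : Set V) : Prop :=
  (G.induce Sᶜ).IsAcyclic

def IsMinFVS {V : Type*} (G : SimpleGraph V) (S : Set V) : Prop :=
  IsFVS G S ∧ ∀ T : Set V, T ⊂ S → ¬ IsFVS G T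

noncomputable def mmfvs {V : Type*} (G : SimpleGraph V) : ℕ :=
  sSup {k | ∃ S : Set V, IsMinFVS G S ∧ S.ncard = k}

private lemma acyclic_of_emb {V W : Type*} {G : SimpleGraph V} {H : SimpleGraph W}
    (f : G ↪g H) (h : H.IsAcyclic) : G.IsAcyclic := by
  intro v p hp
  exact h (p.map f.toHom) (hp.map f.injective)

/-- embedding of a double induce into a single induce -/
private def embDouble {V : Type*} (G : SimpleGraph V) (A : Set V) (B : Set A) (C : Set V)
    (h : ∀ x : A, x ∈ B → x.val ∈ C) : ((G.induce A).induce B) ↪g (G.induce C) where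
  toFun := fun x => ⟨x.val.val, h x.val x.property⟩
  inj' := by
    intro x y hxy
    simp only [Subtype.mk.injEq] at hxy
    exact Subtype.ext (Subtype.ext hxy)
  map_rel_iff' := Iff.rfl

/-- embedding of a single induce into a double induce -/
private def embSingle {V : Type*} (G : SimpleGraph V) (A : Set V) (B : Set A) (C : Set V)
    (h1 : ∀ v : V, v ∈ C → v ∈ A) (h2 : ∀ (v : V) (hv : v ∈ C), (⟨v, h1 v hv⟩ : A) ∈ B) :
    (G.induce C) ↪g ((G.induce A).induce B) where
  toFun := fun x => ⟨⟨x.val, h1 x.val x.property⟩, h2 x.val x.property⟩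
  inj' := by
    intro x y hxy
    simp only [Subtype.mk.injEq] at hxy
    exact Subtype.ext hxy
  map_rel_iff' := Iff.rfl

/-- monotone embedding -/
private def embMono {V : Type*} (G : SimpleGraph V) (B C : Set V) (h : B ⊆ C) :
    (G.induce B) ↪g (G.induce C) where
  toFun := fun x => ⟨x.val, h x.property⟩
  inj' := by
    intro x y hxy
    simp only [Subtype.mk.injEq] at hxy
    exact Subtype.ext hxy
  map_rel_iff' := Iff.rfl

theorem minimal_fvs_of_delete_extends {V : Type*} [Fintype V] [DecidableEq V]
    (G : SimpleGraph V) (u : V) (S : Set (({u}ᶜ : Set V)))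
    (hS : IsMinFVS (G.induce ({u}ᶜ : Set V)) S) :
    ∃ S' : Set V, IsMinFVS G S' ∧ (Subtype.val '' S) ⊆ S' ∧
      S' ⊆ insert u (Subtype.val '' S) ∧ S.ncard ≤ S'.ncard := by
  obtain ⟨hSfvs, hSmin⟩ := hS
  set Sv : Set V := Subtype.val '' S with hSv
  have hSvA : Sv ⊆ ({u}ᶜ : Set V) := by rintro v ⟨x, _, rfl⟩; exact x.property
  have hncard : S.ncard = Sv.ncard := (Set.ncard_image_of_injective S Subtype.val_injective).symm
  -- key: any FVS T' of G with T' \ {u} ⊊ Sv gives a contradiction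
  have key : ∀ T' : Set V, IsFVS G T' → T' \ {u} ⊂ Sv → False := by
    intro T' hT' hsub
    set S₀ : Set ({u}ᶜ : Set V) := {x | x.val ∈ T'} with hS₀
    have hS₀v : Subtype.val '' S₀ = T' \ {u} := by
      ext v
      constructor
      · rintro ⟨x, hx, rfl⟩
        exact ⟨hx, x.property⟩
      · rintro ⟨hv, hvu⟩
        exact ⟨⟨v, hvu⟩, hv, rfl⟩
    have hS₀S : S₀ ⊂ S := by
      constructor
      · intro x hx
        have hxv : x.val ∈ Sv := hsub.subset ⟨hx, x.property⟩
        obtain ⟨y, hy, hyx⟩ := hxv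
        rwa [← Subtype.ext hyx.symm] at hy
      · intro hcon
        apply hsub.not_subset
        intro v hv
        obtain ⟨x, hx, rfl⟩ := hv
        exact ⟨hcon hx, x.property⟩
    apply hSmin S₀ hS₀S
    refine acyclic_of_emb (embDouble G ({u}ᶜ : Set V) S₀ᶜ T'ᶜ ?_) hT'
    intro x hx
    exact hx
  by_cases hfvs : IsFVS G Sv
  · -- take S' = Sv
    refine ⟨Sv, ⟨hfvs, ?_⟩, subset_rfl, Set.subset_insert _ _, hncard.le⟩
    intro T' hT'sub hT'
    apply key T' hT'
    refine ⟨Set.diff_subset.trans hT'sub.subset, fun hcon => ?_⟩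
    apply hT'sub.not_subset
    intro v hv
    exact (hcon hv).1
  · -- take S' = insert u Sv
    have hufvs : IsFVS G (insert u Sv) := by
      refine acyclic_of_emb (embSingle G ({u}ᶜ : Set V) Sᶜ (insert u Sv)ᶜ ?_ ?_) hSfvs
      · intro v hv
        simp only [Set.mem_compl_iff, Set.mem_insert_iff, not_or] at hv ⊢
        simp only [Set.mem_singleton_iff]
        exact hv.1
      · intro v hv
        simp only [Set.mem_compl_iff, Set.mem_insert_iff, not_or] at hv
        intro hvS
        exact hv.2 ⟨⟨v, _⟩, hvS, rfl⟩
    refine ⟨insert u Sv, ⟨hufvs, ?_⟩, Set.subset_insert _ _, subset_rfl, ?_⟩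
    · intro T' hT'sub hT'
      by_cases hu : u ∈ T'
      · apply key T' hT'
        constructor
        · rintro v ⟨hv, hvu⟩
          rcases hT'sub.subset hv with h | h
          · exact absurd h hvu
          · exact h
        · intro hcon
          apply hT'sub.not_subset
          intro v hv
          rcases hv with rfl | hv
          · exact hu
          · exact (hcon hv).1
      · apply hfvs
        have hT'Sv : T' ⊆ Sv := by
          intro v hv
          rcases hT'sub.subset hv with rfl | h
          · exact absurd hv hu
          · exact h
        exact acyclic_of_emb (embMono G Svᶜ T'ᶜ (Set.compl_subset_compl.mpr hT'Sv)) hT'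
    · rw [hncard]
      exact Set.ncard_le_ncard (Set.subset_insert _ _) (Set.toFinite _)
end

section
/- If u,v are adjacent vertices of G, both of degree exactly 2, with no common neighbor, then mmfvs(G/uv) = mmfvs(G). -/
open SimpleGraph

def contract {V : Type*} (G : SimpleGraph V) (u v : V) :
    SimpleGraph {x : V // x ≠ v} where
  Adj a b := a ≠ b ∧ (G.Adj a.1 b.1 ∨ (a.1 = u ∧ G.Adj v b.1) ∨ (b.1 = u ∧ G.Adj a.1 v))
  symm := by
    constructor
    rintro a b ⟨hab, h | ⟨h1, h2⟩ | ⟨h1, h2⟩⟩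
    · exact ⟨hab.symm, Or.inl h.symm⟩
    · exact ⟨hab.symm, Or.inr (Or.inr ⟨h1, h2.symm⟩)⟩
    · exact ⟨hab.symm, Or.inr (Or.inl ⟨h1, h2.symm⟩)⟩
  loopless := by constructor; rintro a ⟨h, -⟩; exact h rfl

/-!
A cycle through a vertex of degree two passes through both of its neighbours, so `u` and `v`
lie on exactly the same cycles. Hence a minimal feedback vertex set never contains both, and
exchanging `u` and `v` maps minimal feedback vertex sets to minimal ones of the same size; so
it suffices to consider those avoiding `v`. For these, cycles correspond: a cycle of `G` through
`a, u, v, b` (where `N(u) = {v, a}` and `N(v) = {u, b}`) becomes the cycle through `a, u, b` of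
`G/uv`, which is a genuine cycle because `a ≠ b`, and all other cycles are common to both graphs.
The vertex sets of corresponding cycles differ at most by `v`, so a set avoiding `v` is a
(minimal) feedback vertex set of `G` if and only if it is one of `G/uv`.
-/

open Walk

namespace SimpleGraph.Walk

variable {A : Type*} {H : SimpleGraph A}

theorem IsCycle.exists_isPath_of_start {w p q : A} {c : H.Walk w w} (hc : c.IsCycle)
    (hN : ∀ z, H.Adj w z → z = p ∨ z = q) :
    ∃ r : H.Walk p q, r.IsPath ∧ w ∉ r.support ∧ ∀ z ∈ r.support, z ∈ c.support := by
  cases c with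
  | nil => exact absurd hc not_isCycle_nil
  | @cons _ x _ hwx t =>
    have hlen := hc.three_le_length
    rw [cons_isCycle_iff] at hc
    obtain ⟨y, hwy, r, ht⟩ := exists_eq_cons_of_ne hwx.ne t.reverse
    have hr : r.IsPath ∧ w ∉ r.support := (cons_isPath_iff hwy r).1 (ht ▸ hc.1.reverse)
    have hsub : ∀ z ∈ r.support, z ∈ (cons hwx t).support := fun z hz => by
      have : z ∈ t.reverse.support := ht ▸ List.mem_cons_of_mem _ hz
      rw [support_reverse, List.mem_reverse] at this
      exact List.mem_cons_of_mem _ this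
    have hxy : y ≠ x := by
      rintro rfl
      have hlen' := congrArg length ht
      simp only [length_reverse, length_cons, (isPath_iff_nil.1 hr.1).length_eq_zero] at hlen hlen'
      omega
    rcases hN x hwx with rfl | rfl <;> rcases hN y hwy with rfl | rfl
    · exact absurd rfl hxy
    · exact ⟨r.reverse, hr.1.reverse, by simpa using hr.2, fun z hz => hsub z (by simpa using hz)⟩
    · exact ⟨r, hr.1, hr.2, hsub⟩
    · exact absurd rfl hxy

theorem IsPath.isCycle_cons_concat {w p q : A} {r : H.Walk p q} (hr : r.IsPath)
    (hw : w ∉ r.support) (hpq : p ≠ q) (hwp : H.Adj w p) (hqw : H.Adj q w) :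
    (cons hwp (r.concat hqw)).IsCycle := by
  refine (cons_isCycle_iff _ _).2 ⟨hr.concat hw hqw, ?_⟩
  rw [edges_concat, List.concat_eq_append, List.mem_append, List.mem_singleton, Sym2.eq_iff]
  rintro (he | ⟨rfl, -⟩ | ⟨-, rfl⟩)
  · exact hw (r.fst_mem_support_of_mem_edges he)
  · exact hw r.end_mem_support
  · exact hpq rfl

theorem edges_subset_edgeSet_of_notMem_support {H' : SimpleGraph A} {w x y : A}
    (hHH' : ∀ x y, x ≠ w → y ≠ w → H.Adj x y → H'.Adj x y) {p : H.Walk x y}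
    (hp : w ∉ p.support) : ∀ e ∈ p.edges, e ∈ H'.edgeSet := by
  intro e he
  induction e using Sym2.ind with
  | h x y =>
    exact hHH' x y (fun h => hp (h ▸ p.fst_mem_support_of_mem_edges he))
      (fun h => hp (h ▸ p.snd_mem_support_of_mem_edges he)) (p.adj_of_mem_edges he)

theorem IsCycle.exists_adj_of_mem_support {x z : A} {c : H.Walk x x} (hc : c.IsCycle)
    (hz : z ∈ c.support) : ∃ y, H.Adj z y := by
  classical
  exact ⟨_, adj_snd (hc.rotate hz).not_nil⟩

theorem IsCycle.exists_isPath_of_mem_support {x w p q : A} {c : H.Walk x x} (hc : c.IsCycle)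
    (hw : w ∈ c.support) (hN : ∀ z, H.Adj w z → z = p ∨ z = q) :
    ∃ r : H.Walk p q, r.IsPath ∧ w ∉ r.support ∧ ∀ z ∈ r.support, z ∈ c.support := by
  classical
  obtain ⟨r, hr, hwr, hsub⟩ := (hc.rotate hw).exists_isPath_of_start hN
  exact ⟨r, hr, hwr, fun z hz => (mem_support_rotate_iff c w hw).1 (hsub z hz)⟩

end SimpleGraph.Walk

section FeedbackVertexSet

variable {A B : Type*} {H : SimpleGraph A}

theorem isFVS_iff_forall_isCycle {S : Set A} :
    IsFVS H S ↔ ∀ x (c : H.Walk x x), c.IsCycle → ∃ z ∈ c.support, z ∈ S := by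
  have hι : Function.Injective (Embedding.induce (G := H) Sᶜ).toHom :=
    (Embedding.induce (G := H) Sᶜ).injective
  constructor
  · intro hS x c hc
    by_contra! hcS
    refine hS (c.induce Sᶜ hcS) ?_
    rwa [← isCycle_map_iff_of_injective hι, map_induce]
  · rintro h ⟨x, hx⟩ c hc
    obtain ⟨z, hz, hzS⟩ := h _ _ (hc.map hι)
    rw [Walk.support_map, List.mem_map] at hz
    obtain ⟨z, -, rfl⟩ := hz
    exact z.2 hzS

theorem isMinFVS_image_iff {K : SimpleGraph B} {f : A → B} (hf : f.Injective)
    (hHK : ∀ T, IsFVS H T ↔ IsFVS K (f '' T)) {S : Set A} :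
    IsMinFVS H S ↔ IsMinFVS K (f '' S) := by
  refine and_congr (hHK S) ⟨fun hmin T hT hTK => ?_, fun hmin T hT hTH => ?_⟩
  · have hT_range : T ⊆ Set.range f := hT.subset.trans (Set.image_subset_range f S)
    have hpre : f ⁻¹' T ⊂ S :=
      ((Set.preimage_mono hT.subset).trans_eq (Set.preimage_image_eq S hf)).ssubset_of_not_subset
        fun hS => hT.not_subset (Set.image_subset_iff.2 hS)
    exact hmin _ hpre ((hHK _).2 (by rwa [Set.image_preimage_eq_of_subset hT_range]))
  · exact hmin _ (hf.image_strictMono hT) ((hHK T).1 hTH)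

theorem isFVS_induce_iff {s : Set A} (hs : ∀ x y, H.Adj x y → x ∈ s) {T : Set s} :
    IsFVS (H.induce s) T ↔ IsFVS H (Subtype.val '' T) := by
  have hι : Function.Injective (Embedding.induce (G := H) s).toHom :=
    (Embedding.induce (G := H) s).injective
  simp only [isFVS_iff_forall_isCycle]
  constructor
  · intro h x c hc
    have hcs : ∀ z ∈ c.support, z ∈ s := fun z hz =>
      (hc.exists_adj_of_mem_support hz).elim (hs z)
    have hc' : (c.induce s hcs).IsCycle := by
      rwa [← isCycle_map_iff_of_injective hι, map_induce]
    obtain ⟨z, hz, hzT⟩ := h _ _ hc'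
    refine ⟨z, ?_, z, hzT, rfl⟩
    simpa using hz
  · intro h x c hc
    obtain ⟨z, hz, z', hz'T, rfl⟩ := h _ _ (hc.map hι)
    rw [Walk.support_map, List.mem_map] at hz
    obtain ⟨z'', hz'', hzz⟩ := hz
    exact ⟨z'', hz'', Subtype.val_injective hzz ▸ hz'T⟩

end FeedbackVertexSet

section OnSameCycles

variable {A : Type*} {H : SimpleGraph A} {u v : A}

def OnSameCycles (H : SimpleGraph A) (u v : A) : Prop :=
  ∀ x (c : H.Walk x x), c.IsCycle → (u ∈ c.support ↔ v ∈ c.support)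

variable [DecidableEq A]

theorem OnSameCycles.isFVS_swap_image_iff (h : OnSameCycles H u v) {S : Set A} :
    IsFVS H (Equiv.swap u v '' S) ↔ IsFVS H S := by
  simp only [isFVS_iff_forall_isCycle, Set.mem_image_equiv, Equiv.symm_swap]
  refine forall₂_congr fun x c => forall_congr' fun hc => ?_
  have hswap : ∀ z, Equiv.swap u v z ∈ c.support ↔ z ∈ c.support := by
    intro z
    rw [Equiv.swap_apply_def]
    split_ifs with hzu hzv
    · rw [hzu, h x c hc]
    · rw [hzv, h x c hc]
    · rfl
  exact ⟨fun ⟨z, hz, hzS⟩ => ⟨_, (hswap z).2 hz, hzS⟩,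
    fun ⟨z, hz, hzS⟩ => ⟨Equiv.swap u v z, (hswap _).2 hz, by rwa [Equiv.swap_apply_self]⟩⟩

theorem OnSameCycles.isMinFVS_swap_image_iff (h : OnSameCycles H u v) {S : Set A} :
    IsMinFVS H (Equiv.swap u v '' S) ↔ IsMinFVS H S :=
  (isMinFVS_image_iff (Equiv.injective _) fun _ => h.isFVS_swap_image_iff.symm).symm

theorem OnSameCycles.notMem_of_isMinFVS (h : OnSameCycles H u v) (hne : u ≠ v) {S : Set A}
    (hS : IsMinFVS H S) (hv : v ∈ S) : u ∉ S := by
  intro hu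
  refine hS.2 (S \ {u}) (Set.sdiff_singleton_ssubset.2 hu) ?_
  rw [isFVS_iff_forall_isCycle]
  intro x c hc
  obtain ⟨z, hz, hzS⟩ := isFVS_iff_forall_isCycle.1 hS.1 x c hc
  by_cases hzu : z = u
  · exact ⟨v, (h x c hc).1 (hzu ▸ hz), hv, hne.symm⟩
  · exact ⟨z, hz, hzS, hzu⟩

theorem OnSameCycles.exists_isMinFVS_notMem (h : OnSameCycles H u v) (hne : u ≠ v) {S : Set A}
    (hS : IsMinFVS H S) : ∃ S', IsMinFVS H S' ∧ v ∉ S' ∧ S'.ncard = S.ncard := by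
  by_cases hv : v ∈ S
  · refine ⟨Equiv.swap u v '' S, h.isMinFVS_swap_image_iff.2 hS, ?_,
      Set.ncard_image_of_injective _ (Equiv.injective _)⟩
    rw [Set.mem_image_equiv, Equiv.symm_swap, Equiv.swap_apply_right]
    exact h.notMem_of_isMinFVS hne hS hv
  · exact ⟨S, hS, hv, rfl⟩

end OnSameCycles

section Contraction

variable {V : Type*} {G : SimpleGraph V} {u v a b x y : V}

-- The contraction with its vertices put back into `V` (and `v` isolated), so that walks of `G`
-- and of the contraction can be compared by `Walk.transfer`.
def contractSpanning (G : SimpleGraph V) (u v : V) : SimpleGraph V :=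
  (contract G u v).map (Function.Embedding.subtype _)

theorem contract_eq_induce_contractSpanning (G : SimpleGraph V) (u v : V) :
    contract G u v = (contractSpanning G u v).induce {x | x ≠ v} :=
  (comap_map_eq _ _).symm

theorem contractSpanning_adj :
    (contractSpanning G u v).Adj x y ↔ x ≠ v ∧ y ≠ v ∧ x ≠ y ∧
      (G.Adj x y ∨ (x = u ∧ G.Adj v y) ∨ (y = u ∧ G.Adj x v)) := by
  simp only [contractSpanning, map_adj, Function.Embedding.subtype_apply]
  constructor
  · rintro ⟨x, y, ⟨hxy, hadj⟩, rfl, rfl⟩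
    exact ⟨x.2, y.2, fun h => hxy (Subtype.ext h), hadj⟩
  · rintro ⟨hx, hy, hxy, hadj⟩
    exact ⟨⟨x, hx⟩, ⟨y, hy⟩, ⟨fun h => hxy (congrArg Subtype.val h), hadj⟩, rfl, rfl⟩

theorem adj_iff_of_neighborSet_eq_pair {p q z : V} (h : G.neighborSet u = {p, q}) :
    G.Adj u z ↔ z = p ∨ z = q := by
  rw [← mem_neighborSet, h]
  rfl

theorem isFVS_contract_iff {T : Set {x // x ≠ v}} :
    IsFVS (contract G u v) T ↔ IsFVS (contractSpanning G u v) (Subtype.val '' T) := by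
  rw [contract_eq_induce_contractSpanning]
  exact isFVS_induce_iff fun x y h => (contractSpanning_adj.1 h).1

theorem onSameCycles_of_neighborSet_eq (hNu : G.neighborSet u = {v, a})
    (hNv : G.neighborSet v = {u, b}) : OnSameCycles G u v := by
  classical
  intro x c hc
  constructor
  · intro hu
    obtain ⟨r, -, -, hsub⟩ :=
      hc.exists_isPath_of_mem_support hu fun z => (adj_iff_of_neighborSet_eq_pair hNu).1
    exact hsub v r.start_mem_support
  · intro hv
    obtain ⟨r, -, -, hsub⟩ :=
      hc.exists_isPath_of_mem_support hv fun z => (adj_iff_of_neighborSet_eq_pair hNv).1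
    exact hsub u r.start_mem_support

theorem exists_isCycle_contractSpanning (hNu : G.neighborSet u = {v, a})
    (hNv : G.neighborSet v = {u, b}) (hav : a ≠ v) (hbu : b ≠ u) (hab : a ≠ b)
    {c : G.Walk x x} (hc : c.IsCycle) :
    ∃ (y : V) (c' : (contractSpanning G u v).Walk y y), c'.IsCycle ∧
      ∀ z ∈ c'.support, z ∈ c.support := by
  classical
  have hua : G.Adj u a := (adj_iff_of_neighborSet_eq_pair hNu).2 (Or.inr rfl)
  have huv : u ≠ v := ((adj_iff_of_neighborSet_eq_pair hNu).2 (Or.inl rfl)).ne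
  have hG : ∀ x y, x ≠ v → y ≠ v → G.Adj x y → (contractSpanning G u v).Adj x y :=
    fun x y hx hy h => contractSpanning_adj.2 ⟨hx, hy, h.ne, Or.inl h⟩
  by_cases hu : u ∈ c.support
  -- `c` runs through `a, u, v, b`: shortcut it to `a, u, b`.
  · obtain ⟨r, hr, hur, hsub⟩ :=
      hc.exists_isPath_of_mem_support hu fun z => (adj_iff_of_neighborSet_eq_pair hNu).1
    obtain ⟨z, hvz, r, rfl⟩ := exists_eq_cons_of_ne hav.symm r
    obtain rfl : z = b := ((adj_iff_of_neighborSet_eq_pair hNv).1 hvz).resolve_left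
      fun h => hur (h ▸ List.mem_cons_of_mem _ r.start_mem_support)
    rw [cons_isPath_iff] at hr
    rw [support_cons, List.mem_cons, not_or] at hur
    have hub : (contractSpanning G u v).Adj u z :=
      contractSpanning_adj.2 ⟨huv, hvz.ne', hbu.symm, Or.inr (Or.inl ⟨rfl, hvz⟩)⟩
    have hau : (contractSpanning G u v).Adj a u := hG a u hav huv hua.symm
    have hr' := edges_subset_edgeSet_of_notMem_support hG hr.2
    refine ⟨u, cons hub ((r.transfer _ hr').concat hau),
      (hr.1.transfer hr').isCycle_cons_concat (by simpa using hur.2) hab.symm hub hau, ?_⟩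
    intro y hy
    simp only [support_cons, support_concat, support_transfer, List.mem_cons, List.mem_append,
      List.not_mem_nil, or_false] at hy
    rcases hy with rfl | hy | rfl
    · exact hu
    · exact hsub y (List.mem_cons_of_mem _ hy)
    · exact hu
  · have hv : v ∉ c.support := fun h => hu ((onSameCycles_of_neighborSet_eq hNu hNv x c hc).2 h)
    have hc' := edges_subset_edgeSet_of_notMem_support hG hv
    exact ⟨x, c.transfer _ hc', hc.transfer hc', fun z hz => by simpa using hz⟩

theorem exists_isCycle_of_contractSpanning (hNu : G.neighborSet u = {v, a})
    (hNv : G.neighborSet v = {u, b}) (hav : a ≠ v)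
    {c : (contractSpanning G u v).Walk x x} (hc : c.IsCycle) :
    ∃ (y : V) (c' : G.Walk y y), c'.IsCycle ∧ ∀ z ∈ c'.support, z = v ∨ z ∈ c.support := by
  classical
  have hua : G.Adj u a := (adj_iff_of_neighborSet_eq_pair hNu).2 (Or.inr rfl)
  have huv : G.Adj u v := (adj_iff_of_neighborSet_eq_pair hNu).2 (Or.inl rfl)
  have hvb : G.Adj v b := (adj_iff_of_neighborSet_eq_pair hNv).2 (Or.inr rfl)
  have hG : ∀ x y, x ≠ u → y ≠ u → (contractSpanning G u v).Adj x y → G.Adj x y := by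
    rintro x y hx hy h
    rcases (contractSpanning_adj.1 h).2.2.2 with h | ⟨rfl, -⟩ | ⟨rfl, -⟩
    exacts [h, absurd rfl hx, absurd rfl hy]
  have hvc : v ∉ c.support := fun h =>
    (hc.exists_adj_of_mem_support h).elim fun _ hvy => (contractSpanning_adj.1 hvy).1 rfl
  by_cases hu : u ∈ c.support
  -- `c` runs through `a, u, b`: reroute it through `a, u, v, b`.
  · have hN : ∀ z, (contractSpanning G u v).Adj u z → z = b ∨ z = a := by
      rintro z h
      obtain ⟨-, hzv, hzu, h | ⟨-, h⟩ | ⟨rfl, -⟩⟩ := contractSpanning_adj.1 h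
      · exact Or.inr (((adj_iff_of_neighborSet_eq_pair hNu).1 h).resolve_left hzv)
      · exact Or.inl (((adj_iff_of_neighborSet_eq_pair hNv).1 h).resolve_left hzu.symm)
      · exact absurd rfl hzu
    obtain ⟨r, hr, hur, hsub⟩ := hc.exists_isPath_of_mem_support hu hN
    have hr' := edges_subset_edgeSet_of_notMem_support hG hur
    have hvr : (cons hvb (r.transfer G hr')).IsPath :=
      (cons_isPath_iff _ _).2 ⟨hr.transfer hr', by simpa using fun h => hvc (hsub v h)⟩
    refine ⟨u, cons huv ((cons hvb (r.transfer G hr')).concat hua.symm),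
      hvr.isCycle_cons_concat (by simpa [huv.ne] using hur) hav.symm huv hua.symm, ?_⟩
    intro y hy
    simp only [support_cons, support_concat, support_transfer, List.mem_cons, List.mem_append,
      List.not_mem_nil, or_false] at hy
    rcases hy with rfl | (rfl | hy) | rfl
    · exact Or.inr hu
    · exact Or.inl rfl
    · exact Or.inr (hsub y hy)
    · exact Or.inr hu
  · have hc' := edges_subset_edgeSet_of_notMem_support hG hu
    exact ⟨x, c.transfer G hc', hc.transfer hc', fun z hz => Or.inr (by simpa using hz)⟩

theorem isFVS_contractSpanning_iff (hNu : G.neighborSet u = {v, a})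
    (hNv : G.neighborSet v = {u, b}) (hav : a ≠ v) (hbu : b ≠ u) (hab : a ≠ b) {S : Set V}
    (hvS : v ∉ S) : IsFVS (contractSpanning G u v) S ↔ IsFVS G S := by
  simp only [isFVS_iff_forall_isCycle]
  constructor
  · intro h x c hc
    obtain ⟨y, c', hc', hsub⟩ := exists_isCycle_contractSpanning hNu hNv hav hbu hab hc
    obtain ⟨z, hz, hzS⟩ := h y c' hc'
    exact ⟨z, hsub z hz, hzS⟩
  · intro h x c hc
    obtain ⟨y, c', hc', hsub⟩ := exists_isCycle_of_contractSpanning hNu hNv hav hc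
    obtain ⟨z, hz, hzS⟩ := h y c' hc'
    obtain rfl | hz := hsub z hz
    exacts [absurd hzS hvS, ⟨z, hz, hzS⟩]

theorem isMinFVS_contract_iff (hNu : G.neighborSet u = {v, a})
    (hNv : G.neighborSet v = {u, b}) (hav : a ≠ v) (hbu : b ≠ u) (hab : a ≠ b)
    {T : Set {x // x ≠ v}} : IsMinFVS (contract G u v) T ↔ IsMinFVS G (Subtype.val '' T) :=
  isMinFVS_image_iff Subtype.val_injective fun _ => isFVS_contract_iff.trans
    (isFVS_contractSpanning_iff hNu hNv hav hbu hab fun ⟨z, _, hz⟩ => z.2 hz)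

end Contraction

theorem exists_eq_pair_of_ncard_eq_two_of_mem {α : Type*} {s : Set α} {x : α}
    (hs : s.ncard = 2) (hx : x ∈ s) : ∃ y, y ≠ x ∧ s = {x, y} := by
  obtain ⟨y, z, hyz, rfl⟩ := Set.ncard_eq_two.1 hs
  rcases hx with rfl | rfl
  exacts [⟨z, hyz.symm, rfl⟩, ⟨y, hyz, Set.pair_comm _ _⟩]

theorem mmfvs_contract_degree_two_general {V : Type*}
    (G : SimpleGraph V) (u v : V) (huv : G.Adj u v)
    (hu : (G.neighborSet u).ncard = 2) (hv : (G.neighborSet v).ncard = 2)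
    (hcommon : G.neighborSet u ∩ G.neighborSet v = ∅) :
    mmfvs (contract G u v) = mmfvs G := by
  classical
  obtain ⟨a, hav, hNu⟩ := exists_eq_pair_of_ncard_eq_two_of_mem hu huv
  obtain ⟨b, hbu, hNv⟩ := exists_eq_pair_of_ncard_eq_two_of_mem hv huv.symm
  have hab : a ≠ b := by
    rintro rfl
    have ha : a ∈ G.neighborSet u ∩ G.neighborSet v := ⟨hNu ▸ Or.inr rfl, hNv ▸ Or.inr rfl⟩
    rwa [hcommon] at ha
  have hmin := fun T => isMinFVS_contract_iff (T := T) hNu hNv hav hbu hab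
  unfold mmfvs
  congr 1
  ext k
  constructor
  · rintro ⟨T, hT, rfl⟩
    exact ⟨_, (hmin T).1 hT, Set.ncard_image_of_injective _ Subtype.val_injective⟩
  · rintro ⟨S, hS, rfl⟩
    obtain ⟨S', hS', hvS', hcard⟩ :=
      (onSameCycles_of_neighborSet_eq hNu hNv).exists_isMinFVS_notMem huv.ne hS
    have hrange : S' ⊆ Set.range (Subtype.val : {x // x ≠ v} → V) :=
      fun z hz => ⟨⟨z, fun h => hvS' (h ▸ hz)⟩, rfl⟩
    refine ⟨Subtype.val ⁻¹' S', (hmin _).2 ?_, ?_⟩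
    · rwa [Set.image_preimage_eq_of_subset hrange]
    · rw [Set.ncard_preimage_of_injective_subset_range Subtype.val_injective hrange, hcard]

theorem mmfvs_contract_degree_two {V : Type*} [Fintype V] [DecidableEq V]
    (G : SimpleGraph V) (u v : V) (huv : G.Adj u v)
    (hu : (G.neighborSet u).ncard = 2) (hv : (G.neighborSet v).ncard = 2)
    (hcommon : G.neighborSet u ∩ G.neighborSet v = ∅) :
    mmfvs (contract G u v) = mmfvs G :=
  mmfvs_contract_degree_two_general G u v huv hu hv hcommon
end

section
/- For every n ≥ 2, the graph G obtained from the complete graph K_n by adding, for each pair {u,v} of clique vertices, 2n new vertices adjacent exactly to u and v, satisfies: G has order n³ - n² + n, and every minimal feedback vertex set of G has size at most 3n. Consequently there are reduced graphs H with mmfvs(H) = O(|V(H)|^{1/3}). -/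
open SimpleGraph

/-- `K_n` plus, for each pair `u < v` of clique vertices, `2n` new vertices
adjacent exactly to `u` and `v`. -/
def cliqueGadget (n : ℕ) :
    SimpleGraph (Fin n ⊕ ({p : Fin n × Fin n // p.1 < p.2} × Fin (2 * n))) where
  Adj x y :=
    match x, y with
    | Sum.inl a, Sum.inl b => a ≠ b
    | Sum.inl a, Sum.inr (e, _) => a = e.1.1 ∨ a = e.1.2
    | Sum.inr (e, _), Sum.inl a => a = e.1.1 ∨ a = e.1.2
    | Sum.inr _, Sum.inr _ => False
  symm := ⟨by rintro (a | e) (b | f) h <;> simp_all <;> omega⟩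
  loopless := ⟨by rintro (a | e) <;> simp⟩

/-!
Removing a vertex from a feedback vertex set keeps it one as soon as the vertex has at most
one neighbour outside the set, since no cycle can pass through such a vertex. So every gadget
vertex in a minimal feedback vertex set `S` has both its clique neighbours outside `S`. On the
other hand at most two clique vertices lie outside `S`, as three would span a triangle. Hence
all gadget vertices of `S` hang off one and the same pair, and `|S| ≤ n + 2n`.
-/

namespace SimpleGraph

variable {V : Type*} {G : SimpleGraph V} {s : Set V}

theorem isAcyclic_induce_iff :
    (G.induce s).IsAcyclic ↔
      ∀ ⦃v : V⦄ (c : G.Walk v v), c.IsCycle → ¬ ∀ x ∈ c.support, x ∈ s := by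
  refine ⟨fun h v c hc hcs => h (c.induce s hcs) ?_, fun h ⟨v, hv⟩ c hc => ?_⟩
  · rw [← Walk.map_induce c hcs] at hc
    exact (Walk.isCycle_map_iff_of_injective Subtype.val_injective).1 hc
  · refine h _ (hc.map (f := (Embedding.induce s).toHom) Subtype.val_injective) fun x hx => ?_
    rw [Walk.support_map, List.mem_map] at hx
    obtain ⟨⟨y, hy⟩, -, rfl⟩ := hx
    exact hy

theorem isAcyclic_induce_insert {w : V} (hs : (G.induce s).IsAcyclic)
    (hw : (G.neighborSet w ∩ s).Subsingleton) : (G.induce (insert w s)).IsAcyclic := by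
  classical
  rw [isAcyclic_induce_iff] at hs ⊢
  intro v c hc hcs
  by_cases hwc : w ∈ c.support
  · -- A cycle through `w` enters and leaves it through two distinct neighbours.
    set c' := c.rotate w hwc
    have hc' : c'.IsCycle := hc.rotate hwc
    have mem : ∀ x ∈ c'.support, G.Adj w x → x ∈ G.neighborSet w ∩ s := fun x hx hwx =>
      ⟨hwx, (hcs x ((c.mem_support_rotate_iff w hwc).1 hx)).resolve_left hwx.ne'⟩
    exact hc'.snd_ne_penultimate <| hw
      (mem _ (c'.getVert_mem_support 1) (c'.adj_snd hc'.not_nil))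
      (mem _ (c'.getVert_mem_support _) (c'.adj_penultimate hc'.not_nil).symm)
  · exact hs c hc fun x hx => (hcs x hx).resolve_left (ne_of_mem_of_not_mem hx hwc)

end SimpleGraph

section FeedbackVertexSet

variable {V : Type*} {G : SimpleGraph V} {S : Set V}

theorem IsFVS.sdiff_singleton {w : V} (hS : IsFVS G S)
    (hw : (G.neighborSet w ∩ Sᶜ).Subsingleton) : IsFVS G (S \ {w}) := by
  rw [IsFVS, Set.compl_sdiff, Set.singleton_union]
  exact isAcyclic_induce_insert hS hw

theorem IsMinFVS.nontrivial_neighborSet_inter_compl {w : V} (hS : IsMinFVS G S) (hw : w ∈ S) :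
    (G.neighborSet w ∩ Sᶜ).Nontrivial := by
  rw [← Set.not_subsingleton_iff]
  exact fun h => hS.2 _ (Set.sdiff_singleton_ssubset.2 hw) (hS.1.sdiff_singleton h)

theorem IsFVS.mem_or_mem_or_mem_of_adj {a b c : V} (hS : IsFVS G S)
    (hab : G.Adj a b) (hac : G.Adj a c) (hbc : G.Adj b c) : a ∈ S ∨ b ∈ S ∨ c ∈ S := by
  classical
  by_contra! h
  obtain ⟨ha, hb, hc⟩ := h
  apply IsAcyclic.cliqueFree (G := G.induce Sᶜ) hS le_rfl {⟨a, ha⟩, ⟨b, hb⟩, ⟨c, hc⟩}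
  rw [is3Clique_triple_iff]
  simpa using ⟨hab, hac, hbc⟩

end FeedbackVertexSet

theorem Set.ncard_le_of_inr_fst_eq {α β γ : Type*} [Fintype α] [Fintype β] [Fintype γ]
    {S : Set (α ⊕ β × γ)} (h : ∀ x y, .inr x ∈ S → .inr y ∈ S → x.1 = y.1) :
    S.ncard ≤ Fintype.card α + Fintype.card γ := by
  classical
  rw [Set.ncard_eq_toFinset_card', ← Finset.card_toLeft_add_card_toRight]
  gcongr
  · exact Finset.card_le_univ _
  · refine Finset.card_le_card_of_injOn Prod.snd (fun _ _ => Finset.mem_univ _)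
      fun x hx y hy hxy => ?_
    simp only [Finset.mem_coe, Finset.mem_toRight, Set.mem_toFinset] at hx hy
    exact Prod.ext (h x y hx hy) hxy

theorem card_cliqueGadget_vertices (n : ℕ) :
    Fintype.card (Fin n ⊕ ({p : Fin n × Fin n // p.1 < p.2} × Fin (2 * n)))
      = n ^ 3 - n ^ 2 + n := by
  have hpairs : Fintype.card {p : Fin n × Fin n // p.1 < p.2} * 2 = n * (n - 1) := by
    rw [Fintype.card_subtype, Fintype.card_product_filter_lt, Fintype.card_fin,
      Nat.choose_two_right, Nat.div_mul_cancel (Nat.even_mul_pred_self n).two_dvd]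
  simp only [Fintype.card_sum, Fintype.card_prod, Fintype.card_fin]
  have hgadgets : Fintype.card {p : Fin n × Fin n // p.1 < p.2} * (2 * n) = n ^ 2 * (n - 1) := by
    rw [← mul_assoc, hpairs]
    ring
  rw [hgadgets, Nat.mul_sub_one, ← pow_succ]
  exact Nat.add_comm _ _

section CliqueGadget

variable {n : ℕ}

@[simp] theorem cliqueGadget_adj_inl_inl {a b : Fin n} :
    (cliqueGadget n).Adj (.inl a) (.inl b) ↔ a ≠ b := Iff.rfl

theorem cliqueGadget_neighborSet_inr (e : {p : Fin n × Fin n // p.1 < p.2}) (i : Fin (2 * n)) :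
    (cliqueGadget n).neighborSet (.inr (e, i)) = {.inl e.1.1, .inl e.1.2} := by
  ext (a | f) <;> simp [cliqueGadget, eq_comm]

theorem IsMinFVS.cliqueGadget_inl_notMem {S} (hS : IsMinFVS (cliqueGadget n) S)
    {e : {p : Fin n × Fin n // p.1 < p.2}} {i : Fin (2 * n)} (he : .inr (e, i) ∈ S) :
    .inl e.1.1 ∉ S ∧ .inl e.1.2 ∉ S := by
  have h := hS.nontrivial_neighborSet_inter_compl he
  rw [cliqueGadget_neighborSet_inr] at h
  obtain ⟨x, ⟨hx, hxS⟩, y, ⟨hy, hyS⟩, hxy⟩ := h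
  rcases hx with rfl | rfl <;> rcases hy with rfl | rfl
  exacts [absurd rfl hxy, ⟨hxS, hyS⟩, ⟨hyS, hxS⟩, absurd rfl hxy]

theorem IsFVS.cliqueGadget_eq_or_eq {S} (hS : IsFVS (cliqueGadget n) S) {a b c : Fin n}
    (hab : a ≠ b) (ha : .inl a ∉ S) (hb : .inl b ∉ S) (hc : .inl c ∉ S) :
    c = a ∨ c = b := by
  by_contra! hne
  have := hS.mem_or_mem_or_mem_of_adj (cliqueGadget_adj_inl_inl.2 hab)
    (cliqueGadget_adj_inl_inl.2 hne.1.symm) (cliqueGadget_adj_inl_inl.2 hne.2.symm)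
  tauto

theorem IsMinFVS.cliqueGadget_eq_of_inr_mem {S} (hS : IsMinFVS (cliqueGadget n) S)
    {e e' : {p : Fin n × Fin n // p.1 < p.2}} {i j : Fin (2 * n)}
    (he : .inr (e, i) ∈ S) (he' : .inr (e', j) ∈ S) : e = e' := by
  obtain ⟨h₁, h₂⟩ := hS.cliqueGadget_inl_notMem he
  obtain ⟨h₁', h₂'⟩ := hS.cliqueGadget_inl_notMem he'
  have hfst := hS.1.cliqueGadget_eq_or_eq e.2.ne h₁ h₂ h₁'
  have hsnd := hS.1.cliqueGadget_eq_or_eq e.2.ne h₁ h₂ h₂'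
  have he_lt := e.2
  have he'_lt := e'.2
  ext <;> grind

end CliqueGadget

theorem cliqueGadget_order_and_mmfvs_general (n : ℕ) :
    Fintype.card (Fin n ⊕ ({p : Fin n × Fin n // p.1 < p.2} × Fin (2 * n)))
      = n ^ 3 - n ^ 2 + n ∧
    ∀ S, IsMinFVS (cliqueGadget n) S → S.ncard ≤ 3 * n := by
  refine ⟨card_cliqueGadget_vertices n, fun S hS => ?_⟩
  have := Set.ncard_le_of_inr_fst_eq fun x y hx hy => hS.cliqueGadget_eq_of_inr_mem hx hy
  simp only [Fintype.card_fin] at this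
  omega

theorem cliqueGadget_order_and_mmfvs (n : ℕ) (hn : 2 ≤ n) :
    Fintype.card (Fin n ⊕ ({p : Fin n × Fin n // p.1 < p.2} × Fin (2 * n)))
      = n ^ 3 - n ^ 2 + n ∧
    ∀ S, IsMinFVS (cliqueGadget n) S → S.ncard ≤ 3 * n :=
  cliqueGadget_order_and_mmfvs_general n
end

section
/- Let G be a graph and G' be obtained from G by adding, for each pair of vertices u,v of G, an independent set I_{uv} of n new vertices each adjacent exactly to u and v, where n = |V(G)|. Then mmfvs(G') ≥ (n-1)·C(α(G),2), where α(G) is the independence number of G and C(m,2) = m(m-1)/2. -/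
open SimpleGraph

def IsIndep {V : Type*} (G : SimpleGraph V) (S : Set V) : Prop :=
  ∀ a ∈ S, ∀ b ∈ S, ¬ G.Adj a b

/-- The independence number of `G`. -/
noncomputable def alphaNum {V : Type*} (G : SimpleGraph V) : ℕ :=
  sSup {k | ∃ S : Set V, IsIndep G S ∧ S.ncard = k}

/-- `G` together with, for each unordered pair `{u,v}` of distinct vertices,
an independent set of `n` new vertices each adjacent exactly to `u` and `v`. -/
def pairBlowup {V : Type*} (G : SimpleGraph V) (n : ℕ) :
    SimpleGraph (V ⊕ ({e : Sym2 V // ¬ e.IsDiag} × Fin n)) where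
  Adj x y :=
    match x, y with
    | Sum.inl a, Sum.inl b => G.Adj a b
    | Sum.inl a, Sum.inr (e, _) => a ∈ e.1
    | Sum.inr (e, _), Sum.inl a => a ∈ e.1
    | Sum.inr _, Sum.inr _ => False
  symm := ⟨by rintro (a | e) (b | f) h <;> simp_all [SimpleGraph.adj_comm]⟩
  loopless := ⟨by rintro (a | e) <;> simp⟩

/-!
Fix a maximum independent set `A` of `G` and `a ∈ A`. Delete every vertex of `G` outside `A`
and every new vertex whose two neighbours both lie in `A`, except copy `0` of `I_{ab}` for each
`b ∈ A`. What survives is `A`, the new vertices with a neighbour outside `A` (now of degree at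
most one), and a spider with centre `a` and legs `a - I_{ab}[0] - b`: a forest. Putting back any
deleted vertex closes a cycle: two copies of `I_{wa}` for `w ∉ A`, two copies of `I_{ab}`, or
`u - I_{uv}[i] - v - I_{va}[0] - a - I_{au}[0] - u` when `a ∉ {u, v}`. The deleted set contains
`n - 1` copies of `I_{uv}` for each pair in `A`.
-/

namespace SimpleGraph

variable {U : Type*} {H : SimpleGraph U}

def MinDegreeTwoOn (H : SimpleGraph U) (W : Set U) : Prop :=
  ∀ v ∈ W, ∃ a ∈ W, ∃ b ∈ W, a ≠ b ∧ H.Adj v a ∧ H.Adj v b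

lemma Walk.IsCycle.minDegreeTwoOn_support {u : U} {p : H.Walk u u} (hp : p.IsCycle) :
    H.MinDegreeTwoOn {v | v ∈ p.support} := by
  intro v hv
  obtain ⟨a, b, hab, hnbr⟩ := Set.ncard_eq_two.mp (hp.ncard_neighborSet_toSubgraph_eq_two hv)
  have ha : p.toSubgraph.Adj v a := by
    rw [← Subgraph.mem_neighborSet, hnbr]; exact Set.mem_insert a {b}
  have hb : p.toSubgraph.Adj v b := by
    rw [← Subgraph.mem_neighborSet, hnbr]; exact Set.mem_insert_of_mem a rfl
  exact ⟨a, p.mem_verts_toSubgraph.mp ha.snd_mem, b, p.mem_verts_toSubgraph.mp hb.snd_mem,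
    hab, ha.adj_sub, hb.adj_sub⟩

lemma isAcyclic_induce_of_forall_minDegreeTwoOn {X : Set U}
    (h : ∀ W ⊆ X, H.MinDegreeTwoOn W → W = ∅) : (H.induce X).IsAcyclic := by
  intro x p hp
  have hW : H.MinDegreeTwoOn (Subtype.val '' {v | v ∈ p.support}) := by
    rintro _ ⟨v, hv, rfl⟩
    obtain ⟨a, ha, b, hb, hab, hva, hvb⟩ := hp.minDegreeTwoOn_support v hv
    exact ⟨a, ⟨a, ha, rfl⟩, b, ⟨b, hb, rfl⟩, Subtype.val_injective.ne hab, hva, hvb⟩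
  have hempty := h _ (by rintro _ ⟨v, -, rfl⟩; exact v.2) hW
  exact hempty.subset ⟨x, p.start_mem_support, rfl⟩

lemma not_isAcyclic_induce_of_isCycle {X : Set U} {u : U} {c : H.Walk u u} (hc : c.IsCycle)
    (hX : ∀ w ∈ c.support, w ∈ X) : ¬ (H.induce X).IsAcyclic := fun h =>
  h (c.induce X hX) <|
    (Walk.isCycle_map_iff_of_injective (Embedding.induce (G := H) X).injective).mp <| by
      rwa [Walk.map_induce]

end SimpleGraph

namespace pairBlowup

variable {V : Type*} {G : SimpleGraph V} {n : ℕ}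

lemma adj_inl_inr {a : V} {e : {e : Sym2 V // ¬ e.IsDiag}} {i : Fin n} :
    (pairBlowup G n).Adj (.inl a) (.inr (e, i)) ↔ a ∈ e.1 := Iff.rfl

lemma adj_inr_inl {a : V} {e : {e : Sym2 V // ¬ e.IsDiag}} {i : Fin n} :
    (pairBlowup G n).Adj (.inr (e, i)) (.inl a) ↔ a ∈ e.1 := Iff.rfl

lemma not_adj_inr_inr {e f : {e : Sym2 V // ¬ e.IsDiag}} {i j : Fin n} :
    ¬ (pairBlowup G n).Adj (.inr (e, i)) (.inr (f, j)) := id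

variable {X : Set (V ⊕ ({e : Sym2 V // ¬ e.IsDiag} × Fin n))}

lemma not_isAcyclic_induce_of_square {x y : V} {e : {e : Sym2 V // ¬ e.IsDiag}} {i j : Fin n}
    (hxy : x ≠ y) (he : e.1 = s(x, y)) (hij : i ≠ j) (hx : .inl x ∈ X) (hy : .inl y ∈ X)
    (hi : .inr (e, i) ∈ X) (hj : .inr (e, j) ∈ X) :
    ¬ ((pairBlowup G n).induce X).IsAcyclic := by
  have hex : x ∈ e.1 := he ▸ Sym2.mem_mk_left x y
  have hey : y ∈ e.1 := he ▸ Sym2.mem_mk_right x y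
  let c : (pairBlowup G n).Walk (.inl x) (.inl x) :=
    .cons (adj_inl_inr (i := i) |>.mpr hex) <| .cons (adj_inr_inl.mpr hey) <|
      .cons (adj_inl_inr (i := j) |>.mpr hey) <| .cons (adj_inr_inl.mpr hex) .nil
  refine SimpleGraph.not_isAcyclic_induce_of_isCycle (c := c) ?_ ?_
  · simp [c, SimpleGraph.Walk.cons_isCycle_iff, hxy, hxy.symm, hij]
  · simp [c, hx, hy, hi, hj]

lemma not_isAcyclic_induce_of_hexagon {u v w : V} {e f g : {e : Sym2 V // ¬ e.IsDiag}}
    {i j k : Fin n} (huv : u ≠ v) (hvw : v ≠ w) (hwu : w ≠ u)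
    (he : e.1 = s(u, v)) (hf : f.1 = s(v, w)) (hg : g.1 = s(w, u))
    (hu : .inl u ∈ X) (hv : .inl v ∈ X) (hw : .inl w ∈ X)
    (hi : .inr (e, i) ∈ X) (hj : .inr (f, j) ∈ X) (hk : .inr (g, k) ∈ X) :
    ¬ ((pairBlowup G n).induce X).IsAcyclic := by
  let c : (pairBlowup G n).Walk (.inl u) (.inl u) :=
    .cons (adj_inl_inr (i := i) |>.mpr (he ▸ Sym2.mem_mk_left u v)) <|
      .cons (adj_inr_inl.mpr (he ▸ Sym2.mem_mk_right u v)) <|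
      .cons (adj_inl_inr (i := j) |>.mpr (hf ▸ Sym2.mem_mk_left v w)) <|
      .cons (adj_inr_inl.mpr (hf ▸ Sym2.mem_mk_right v w)) <|
      .cons (adj_inl_inr (i := k) |>.mpr (hg ▸ Sym2.mem_mk_left w u)) <|
      .cons (adj_inr_inl.mpr (hg ▸ Sym2.mem_mk_right w u)) .nil
  refine SimpleGraph.not_isAcyclic_induce_of_isCycle (c := c) ?_ ?_
  · simp [c, SimpleGraph.Walk.cons_isCycle_iff, Subtype.ext_iff, he, hf, hg, huv, hvw, hwu,
      huv.symm, hwu.symm]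
  · simp [c, hu, hv, hw, hi, hj, hk]

def starFVS (A : Set V) (a : V) (n : ℕ) : Set (V ⊕ ({e : Sym2 V // ¬ e.IsDiag} × Fin n)) :=
  {w | w.elim (· ∉ A) fun p => (∀ x ∈ p.1.1, x ∈ A) ∧ ¬(a ∈ p.1.1 ∧ p.2.val = 0)}

variable {A : Set V} {a : V}

@[simp] lemma inl_mem_starFVS {v : V} : .inl v ∈ starFVS A a n ↔ v ∉ A := Iff.rfl

@[simp] lemma inr_mem_starFVS {e : {e : Sym2 V // ¬ e.IsDiag}} {i : Fin n} :
    .inr (e, i) ∈ starFVS A a n ↔ (∀ x ∈ e.1, x ∈ A) ∧ ¬(a ∈ e.1 ∧ i.val = 0) :=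
  Iff.rfl

section Acyclic

variable {W : Set (V ⊕ ({e : Sym2 V // ¬ e.IsDiag} × Fin n))}

lemma hub_of_inr_mem_of_minDegreeTwoOn (hW : W ⊆ (starFVS A a n)ᶜ)
    (hdeg : (pairBlowup G n).MinDegreeTwoOn W) {e : {e : Sym2 V // ¬ e.IsDiag}} {i : Fin n}
    (hei : .inr (e, i) ∈ W) :
    a ∈ e.1 ∧ i.val = 0 ∧ ∃ b ≠ a, .inl b ∈ W := by
  obtain ⟨p, hp, q, hq, hpq, hep, heq⟩ := hdeg _ hei
  obtain ⟨x, rfl⟩ : ∃ x, p = .inl x := by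
    rcases p with x | ⟨f, j⟩
    · exact ⟨x, rfl⟩
    · exact absurd hep not_adj_inr_inr
  obtain ⟨y, rfl⟩ : ∃ y, q = .inl y := by
    rcases q with y | ⟨f, j⟩
    · exact ⟨y, rfl⟩
    · exact absurd heq not_adj_inr_inr
  have hxy : x ≠ y := fun h => hpq (h ▸ rfl)
  have he : e.1 = s(x, y) := (Sym2.mem_and_mem_iff hxy).mp ⟨hep, heq⟩
  have hxA : x ∈ A := by simpa using hW hp
  have hyA : y ∈ A := by simpa using hW hq
  have hhub : a ∈ e.1 ∧ i.val = 0 := by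
    have hall : ∀ z ∈ e.1, z ∈ A := by
      rw [he]; intro z hz; rcases Sym2.mem_iff.mp hz with rfl | rfl <;> assumption
    by_contra h
    exact hW hei ⟨hall, h⟩
  refine ⟨hhub.1, hhub.2, ?_⟩
  by_cases hxa : x = a
  · exact ⟨y, hxa ▸ hxy.symm, hq⟩
  · exact ⟨x, hxa, hp⟩

lemma eq_empty_of_minDegreeTwoOn (hA : IsIndep G A) (hW : W ⊆ (starFVS A a n)ᶜ)
    (hdeg : (pairBlowup G n).MinDegreeTwoOn W) : W = ∅ := by
  have inr_of_adj_inl : ∀ x, .inl x ∈ W → ∀ w ∈ W, (pairBlowup G n).Adj (.inl x) w →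
      ∃ e i, w = .inr (e, i) := by
    rintro x hx (y | ⟨e, i⟩) hy hxy
    · exact absurd hxy (hA x (by simpa using hW hx) y (by simpa using hW hy))
    · exact ⟨e, i, rfl⟩
  refine Set.eq_empty_of_forall_notMem fun w hw => ?_
  obtain ⟨e, i, hei⟩ : ∃ e i, .inr (e, i) ∈ W := by
    rcases w with x | ⟨e, i⟩
    · obtain ⟨p, hp, -, -, -, hxp, -⟩ := hdeg _ hw
      obtain ⟨e, i, rfl⟩ := inr_of_adj_inl x hw p hp hxp
      exact ⟨e, i, hp⟩
    · exact ⟨e, i, hw⟩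
  obtain ⟨-, -, b, hba, hb⟩ := hub_of_inr_mem_of_minDegreeTwoOn hW hdeg hei
  -- Both `W`-neighbours of `b` would have to be the single hub copy of `I_{ab}`.
  have hub : ∀ f j, .inr (f, j) ∈ W → b ∈ f.1 → f.1 = s(a, b) ∧ j.val = 0 := by
    intro f j hfj hbf
    obtain ⟨haf, hj, -⟩ := hub_of_inr_mem_of_minDegreeTwoOn hW hdeg hfj
    exact ⟨(Sym2.mem_and_mem_iff hba.symm).mp ⟨haf, hbf⟩, hj⟩
  obtain ⟨p, hp, q, hq, hpq, hbp, hbq⟩ := hdeg _ hb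
  obtain ⟨f, j, rfl⟩ := inr_of_adj_inl b hb p hp hbp
  obtain ⟨g, k, rfl⟩ := inr_of_adj_inl b hb q hq hbq
  obtain ⟨hf, hj⟩ := hub f j hp hbp
  obtain ⟨hg, hk⟩ := hub g k hq hbq
  exact hpq (by rw [Subtype.ext (hf.trans hg.symm), Fin.ext (hj.trans hk.symm)])

lemma isFVS_starFVS (hA : IsIndep G A) : IsFVS (pairBlowup G n) (starFVS A a n) :=
  SimpleGraph.isAcyclic_induce_of_forall_minDegreeTwoOn fun _ hW hdeg =>
    eq_empty_of_minDegreeTwoOn hA hW hdeg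

end Acyclic

lemma not_isFVS_of_ssubset_starFVS (ha : a ∈ A) (hn : 2 ≤ n)
    {T : Set (V ⊕ ({e : Sym2 V // ¬ e.IsDiag} × Fin n))} (hT : T ⊂ starFVS A a n) :
    ¬ IsFVS (pairBlowup G n) T := by
  obtain ⟨s, hsS, hsT⟩ := Set.exists_of_ssubset hT
  have hX : ∀ w, w ∉ starFVS A a n → w ∈ Tᶜ := fun w hw hwT => hw (hT.subset hwT)
  have haX : .inl a ∈ Tᶜ := hX _ (by simpa using ha)
  unfold IsFVS
  rcases s with w | ⟨e, i⟩
  · have hw : w ∉ A := hsS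
    have hwa : w ≠ a := fun h => hw (h ▸ ha)
    refine not_isAcyclic_induce_of_square (e := ⟨s(w, a), by simpa using hwa⟩)
      (i := ⟨0, by omega⟩) (j := ⟨1, hn⟩) hwa rfl (by simp) hsT haX ?_ ?_ <;>
    exact hX _ (by simp [hw])
  · obtain ⟨hall, hnot⟩ : (∀ x ∈ e.1, x ∈ A) ∧ ¬(a ∈ e.1 ∧ i.val = 0) := hsS
    by_cases hae : a ∈ e.1
    · obtain ⟨b, hb⟩ := Sym2.mem_iff_exists.mp hae
      have hab : a ≠ b := fun h => e.2 (by simp [hb, h])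
      refine not_isAcyclic_induce_of_square (i := ⟨0, by omega⟩) hab hb
        (fun h => hnot ⟨hae, by simp [← h]⟩) haX (hX _ ?_) (hX _ (by simp [hae])) hsT
      simpa using hall b (hb ▸ Sym2.mem_mk_right a b)
    · obtain ⟨u, v, he⟩ : ∃ u v, e.1 = s(u, v) := Sym2.ind (fun u v => ⟨u, v, rfl⟩) e.1
      have huv : u ≠ v := fun h => e.2 (by simp [he, h])
      have hva : v ≠ a := fun h => hae (by simp [he, h])
      have hau : a ≠ u := fun h => hae (by simp [he, h])
      refine not_isAcyclic_induce_of_hexagon (f := ⟨s(v, a), by simpa using hva⟩)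
        (g := ⟨s(a, u), by simpa using hau⟩) (j := ⟨0, by omega⟩) (k := ⟨0, by omega⟩)
        huv hva hau he rfl rfl (hX _ ?_) (hX _ ?_) haX hsT (hX _ (by simp)) (hX _ (by simp))
      · simpa using hall u (he ▸ Sym2.mem_mk_left u v)
      · simpa using hall v (he ▸ Sym2.mem_mk_right u v)

lemma isMinFVS_starFVS (hA : IsIndep G A) (ha : a ∈ A) (hn : 2 ≤ n) :
    IsMinFVS (pairBlowup G n) (starFVS A a n) :=
  ⟨isFVS_starFVS hA, fun _ hT => not_isFVS_of_ssubset_starFVS ha hn hT⟩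

lemma mul_choose_two_le_ncard_starFVS [Finite V] :
    (n - 1) * A.ncard.choose 2 ≤ (starFVS A a n).ncard := by
  classical
  have := Fintype.ofFinite A
  let f : {z : Sym2 A // ¬ z.IsDiag} × Fin (n - 1) → starFVS A a n := fun zi =>
    ⟨.inr (⟨zi.1.1.map (↑), by rw [Sym2.isDiag_map Subtype.val_injective]; exact zi.1.2⟩,
      ⟨zi.2 + 1, by omega⟩),
      fun x hx => by obtain ⟨y, -, rfl⟩ := Sym2.mem_map.mp hx; exact y.2, by simp⟩
  have hf : f.Injective := by
    rintro ⟨z, i⟩ ⟨z', i'⟩ h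
    simp only [f, Subtype.ext_iff, Sum.inr.injEq, Prod.mk.injEq, Fin.mk.injEq,
      Nat.add_right_cancel_iff] at h
    rw [Subtype.ext (Sym2.map.injective Subtype.val_injective h.1), Fin.ext h.2]
  calc (n - 1) * A.ncard.choose 2
      = Nat.card ({z : Sym2 A // ¬ z.IsDiag} × Fin (n - 1)) := by
        rw [Nat.card_prod, Nat.card_eq_fintype_card, Sym2.card_subtype_not_diag,
          ← Nat.card_eq_fintype_card, Nat.card_coe_set_eq, Nat.card_fin, mul_comm]
    _ ≤ (starFVS A a n).ncard := Nat.card_le_card_of_injective f hf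

end pairBlowup

lemma ncard_le_mmfvs {U : Type*} [Finite U] {H : SimpleGraph U} {S : Set U} (hS : IsMinFVS H S) :
    S.ncard ≤ mmfvs H :=
  le_csSup ⟨Nat.card U, by rintro _ ⟨T, -, rfl⟩; exact T.ncard_le_card⟩ ⟨S, hS, rfl⟩

lemma exists_isIndep_ncard_eq_alphaNum {V : Type*} [Finite V] (G : SimpleGraph V) :
    ∃ A, IsIndep G A ∧ A.ncard = alphaNum G :=
  Nat.sSup_mem (s := {k | ∃ A, IsIndep G A ∧ A.ncard = k})
    ⟨0, ∅, fun _ h => absurd h (Set.notMem_empty _), Set.ncard_empty V⟩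
    ⟨Nat.card V, by rintro _ ⟨A, -, rfl⟩; exact A.ncard_le_card⟩

theorem mmfvs_pairBlowup_lower_bound {V : Type*} [Fintype V] (G : SimpleGraph V) :
    (Fintype.card V - 1) * (alphaNum G).choose 2 ≤
      mmfvs (pairBlowup G (Fintype.card V)) := by
  obtain ⟨A, hA, hAα⟩ := exists_isIndep_ncard_eq_alphaNum G
  rcases lt_or_ge (alphaNum G) 2 with hα | hα
  · simp [Nat.choose_eq_zero_of_lt hα]
  obtain ⟨a, ha⟩ : A.Nonempty := Set.nonempty_of_ncard_ne_zero (by omega)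
  have hn : 2 ≤ Fintype.card V := by
    rw [← Nat.card_eq_fintype_card]; exact hα.trans (hAα ▸ A.ncard_le_card)
  calc (Fintype.card V - 1) * (alphaNum G).choose 2
      = (Fintype.card V - 1) * A.ncard.choose 2 := by rw [hAα]
    _ ≤ (pairBlowup.starFVS A a _).ncard := pairBlowup.mul_choose_two_le_ncard_starFVS
    _ ≤ mmfvs (pairBlowup G (Fintype.card V)) :=
      ncard_le_mmfvs (pairBlowup.isMinFVS_starFVS hA ha hn)
end
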